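/- Let A, B ⊂ {1,…,N} be disjoint with |A∪B| = k, fix σ_A ∈ {−1,1}^A, and let j ∉ A∪B. Then ⟨h_j^{[A,B]}⟩_{[A,B]} = 0, and for every function f : Σ_{N−k} → ℝ one has the identity ⟨f; σ_j⟩_{[A,B]} = ⟨∂_j f; σ_j⟩_{[A,B]} + (1/2) ⟨f; h_j^{[A,B]}⟩_{[A,B]}. -/

import Mathlib

open Finset MeasureTheory ProbabilityTheory

noncomputable section SpinGlassDefs

/-- The real spin value `±1` attached to a Boolean spin. -/
def spinVal (b : Bool) : ℝ := if b then 1 else -1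

/-- Flip the `i`-th coordinate of a spin configuration. -/
def flipAt {N : ℕ} (i : Fin N) (σ : Fin N → Bool) : Fin N → Bool :=
  Function.update σ i (!σ i)

/-- Discrete partial derivative `(∂_i f)(σ) = (f(σ) - f(σ̂_i))/2`. -/
def dd {N : ℕ} (i : Fin N) (f : (Fin N → Bool) → ℝ) (σ : Fin N → Bool) : ℝ :=
  (f σ - f (flipAt i σ)) / 2

/-- The configuration agreeing with `σA` on `A` and with `σ` elsewhere. -/
def comb {N : ℕ} (A : Finset (Fin N)) (σA σ : Fin N → Bool) : Fin N → Bool :=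
  fun i => if i ∈ A then σA i else σ i

/-- `f` depends only on the coordinates in `S`. -/
def dependsOn {N : ℕ} (f : (Fin N → Bool) → ℝ) (S : Finset (Fin N)) : Prop :=
  ∀ σ τ : Fin N → Bool, (∀ i ∈ S, σ i = τ i) → f σ = f τ

/-- The `p`-spin interaction term of the reduced Hamiltonian `H_N^{[A,B]}`:
all indices range over `Bᶜ`, spins on `A` are frozen to `σA`. -/
def hamTerm (N : ℕ) (g : (p : ℕ) → (Fin p → Fin N) → ℝ) (βp : ℕ → ℝ)
    (A B : Finset (Fin N)) (σA σ : Fin N → Bool) (p : ℕ) : ℝ :=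
  if 2 ≤ p then
    (βp p / (N : ℝ) ^ (((p : ℝ) - 1) / 2)) *
      ∑ t : Fin p → Fin N,
        (if ∀ l, t l ∉ B then g p t * ∏ l, spinVal (comb A σA σ (t l)) else 0)
  else 0

/-- The reduced Hamiltonian `H_N^{[A,B]}` (with boundary condition `σA` on `A`,
the spins of `B` removed); `H_N` itself is the case `A = B = ∅`. -/
def ham (N : ℕ) (g : (p : ℕ) → (Fin p → Fin N) → ℝ) (βp : ℕ → ℝ) (η : Fin N → ℝ)
    (A B : Finset (Fin N)) (σA σ : Fin N → Bool) : ℝ :=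
  (∑' p : ℕ, hamTerm N g βp A B σA σ p) + ∑ i ∈ Bᶜ, η i * spinVal (comb A σA σ i)

/-- Absolute convergence of all the (reduced) Hamiltonians. -/
def HamSummable (N : ℕ) (g : (p : ℕ) → (Fin p → Fin N) → ℝ) (βp : ℕ → ℝ) : Prop :=
  ∀ (A B : Finset (Fin N)) (σA σ : Fin N → Bool),
    Summable fun p : ℕ => |hamTerm N g βp A B σA σ p|

/-- Gibbs expectation `⟨f⟩_{[A,B]}` of the reduced system.  (The sum runs over full
configurations; since the integrands under consideration depend only on the coordinates
outside `A ∪ B`, the redundant multiplicity cancels between numerator and denominator.) -/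
def gibbs (N : ℕ) (g : (p : ℕ) → (Fin p → Fin N) → ℝ) (βp : ℕ → ℝ) (η : Fin N → ℝ)
    (A B : Finset (Fin N)) (σA : Fin N → Bool) (f : (Fin N → Bool) → ℝ) : ℝ :=
  (∑ σ : Fin N → Bool, f σ * Real.exp (ham N g βp η A B σA σ)) /
    ∑ σ : Fin N → Bool, Real.exp (ham N g βp η A B σA σ)

/-- Gibbs covariance `⟨f;h⟩_{[A,B]}`. -/
def gcov (N : ℕ) (g : (p : ℕ) → (Fin p → Fin N) → ℝ) (βp : ℕ → ℝ) (η : Fin N → ℝ)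
    (A B : Finset (Fin N)) (σA : Fin N → Bool) (f h : (Fin N → Bool) → ℝ) : ℝ :=
  gibbs N g βp η A B σA (fun σ => f σ * h σ) -
    gibbs N g βp η A B σA f * gibbs N g βp η A B σA h

/-- The cavity field `B_j^{[A,B]} = σ_j ∂_j H_N^{[A,B]}`. -/
def cavity (N : ℕ) (g : (p : ℕ) → (Fin p → Fin N) → ℝ) (βp : ℕ → ℝ) (η : Fin N → ℝ)
    (A B : Finset (Fin N)) (σA : Fin N → Bool) (j : Fin N) (σ : Fin N → Bool) : ℝ :=
  spinVal (σ j) * dd j (ham N g βp η A B σA) σ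

/-- The weighted Dirichlet form `D_{[A,B]}(f)`. -/
def Dform (N : ℕ) (g : (p : ℕ) → (Fin p → Fin N) → ℝ) (βp : ℕ → ℝ) (η : Fin N → ℝ)
    (A B : Finset (Fin N)) (σA : Fin N → Bool) (f : (Fin N → Bool) → ℝ) : ℝ :=
  ∑ j ∈ (A ∪ B)ᶜ, gibbs N g βp η A B σA
    (fun σ => (Real.cosh (cavity N g βp η A B σA j σ))⁻¹ ^ 2 * dd j f σ ^ 2)

/-- The inverse spectral gap `a_{[A,B]}`: supremum of `⟨f;f⟩_{[A,B]}/D_{[A,B]}(f)` over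
nonconstant functions of the free spins. -/
def gap (N : ℕ) (g : (p : ℕ) → (Fin p → Fin N) → ℝ) (βp : ℕ → ℝ) (η : Fin N → ℝ)
    (A B : Finset (Fin N)) (σA : Fin N → Bool) : ℝ :=
  sSup {r : ℝ | ∃ f : (Fin N → Bool) → ℝ, dependsOn f ((A ∪ B)ᶜ) ∧
    (∃ σ τ : Fin N → Bool, f σ ≠ f τ) ∧
    r = gcov N g βp η A B σA f f / Dform N g βp η A B σA f}

/-- `aSub k` is the maximal inverse spectral gap `a_{N-k}` over all subsystems with
`|A ∪ B| = k` and all boundary conditions `σA`. -/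
def aSub (N : ℕ) (g : (p : ℕ) → (Fin p → Fin N) → ℝ) (βp : ℕ → ℝ) (η : Fin N → ℝ)
    (k : ℕ) : ℝ :=
  sSup {r : ℝ | ∃ (A B : Finset (Fin N)) (σA : Fin N → Bool),
    Disjoint A B ∧ (A ∪ B).card = k ∧ r = gap N g βp η A B σA}

/-- Magnetization `m_j^{[A,B]} = ⟨σ_j⟩_{[A,B]}`. -/
def mag (N : ℕ) (g : (p : ℕ) → (Fin p → Fin N) → ℝ) (βp : ℕ → ℝ) (η : Fin N → ℝ)
    (A B : Finset (Fin N)) (σA : Fin N → Bool) (j : Fin N) : ℝ :=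
  gibbs N g βp η A B σA (fun σ => spinVal (σ j))

/-- `β := Σ_{p ≥ 2} √(p³ log p) β_p`. -/
def betaTot (βp : ℕ → ℝ) : ℝ :=
  ∑' p : ℕ, if 2 ≤ p then Real.sqrt ((p : ℝ) ^ 3 * Real.log p) * βp p else 0

/-- `C_β = (10³ β)² exp(10³ β)`. -/
def Cbeta (β : ℝ) : ℝ := (10 ^ 3 * β) ^ 2 * Real.exp (10 ^ 3 * β)

/-- The ℓ² → ℓ² operator norm of a real matrix. -/
def opNorm {n : Type} [Fintype n] [DecidableEq n] (M : Matrix n n ℝ) : ℝ :=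
  ‖Matrix.toEuclideanCLM (𝕜 := ℝ) M‖

/-- The matrix `(∂_i B_j^{[A,B]}(σ))_{i,j ∉ A∪B}`. -/
def cavMatrix (N : ℕ) (g : (p : ℕ) → (Fin p → Fin N) → ℝ) (βp : ℕ → ℝ) (η : Fin N → ℝ)
    (A B : Finset (Fin N)) (σA σ : Fin N → Bool) :
    Matrix {i : Fin N // i ∈ (A ∪ B)ᶜ} {i : Fin N // i ∈ (A ∪ B)ᶜ} ℝ :=
  Matrix.of fun i j => dd i.1 (cavity N g βp η A B σA j.1) σ

/-- The event/condition `Ω`: all the matrices `(∂_i B_j^{[A,B]})` have operator norm `≤ 5β`. -/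
def OmegaCond (N : ℕ) (g : (p : ℕ) → (Fin p → Fin N) → ℝ) (βp : ℕ → ℝ) (η : Fin N → ℝ) : Prop :=
  ∀ (A B : Finset (Fin N)), Disjoint A B → ∀ (σA σ : Fin N → Bool),
    opNorm (cavMatrix N g βp η A B σA σ) ≤ 5 * betaTot βp

/-- The diagonal matrix `(Λ^{[A,B]})^{1/2} = diag((1-(m_i^{[A,B]})²)^{-1/2})`. -/
def lambdaHalf (N : ℕ) (g : (p : ℕ) → (Fin p → Fin N) → ℝ) (βp : ℕ → ℝ) (η : Fin N → ℝ)
    (A B : Finset (Fin N)) (σA : Fin N → Bool) :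
    Matrix {i : Fin N // i ∈ (A ∪ B)ᶜ} {i : Fin N // i ∈ (A ∪ B)ᶜ} ℝ :=
  Matrix.diagonal fun i => Real.sqrt (1 - mag N g βp η A B σA i.1 ^ 2)⁻¹

/-- The correlation matrix `M^{[A,B]} = (⟨σ_i;σ_j⟩_{[A,B]})_{i,j ∉ A∪B}`. -/
def corrM (N : ℕ) (g : (p : ℕ) → (Fin p → Fin N) → ℝ) (βp : ℕ → ℝ) (η : Fin N → ℝ)
    (A B : Finset (Fin N)) (σA : Fin N → Bool) :
    Matrix {i : Fin N // i ∈ (A ∪ B)ᶜ} {i : Fin N // i ∈ (A ∪ B)ᶜ} ℝ :=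
  Matrix.of fun i j =>
    gcov N g βp η A B σA (fun σ => spinVal (σ i.1)) (fun σ => spinVal (σ j.1))

/-- The conjugated correlation matrix `(Λ^{[A,B]})^{1/2} M^{[A,B]} (Λ^{[A,B]})^{1/2}`. -/
def conjCorr (N : ℕ) (g : (p : ℕ) → (Fin p → Fin N) → ℝ) (βp : ℕ → ℝ) (η : Fin N → ℝ)
    (A B : Finset (Fin N)) (σA : Fin N → Bool) :
    Matrix {i : Fin N // i ∈ (A ∪ B)ᶜ} {i : Fin N // i ∈ (A ∪ B)ᶜ} ℝ :=
  lambdaHalf N g βp η A B σA * corrM N g βp η A B σA * lambdaHalf N g βp η A B σA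

/-- `h_j^{[A,B]} = (σ_j - m_j^{[A,B]}) - e^{-2σ_j B_j^{[A,B]}}(σ_j + m_j^{[A,B]})`. -/
def hfun (N : ℕ) (g : (p : ℕ) → (Fin p → Fin N) → ℝ) (βp : ℕ → ℝ) (η : Fin N → ℝ)
    (A B : Finset (Fin N)) (σA : Fin N → Bool) (j : Fin N) (σ : Fin N → Bool) : ℝ :=
  (spinVal (σ j) - mag N g βp η A B σA j) -
    Real.exp (-2 * spinVal (σ j) * cavity N g βp η A B σA j σ) *
      (spinVal (σ j) + mag N g βp η A B σA j)

/-- The matrix `S^{[A,B]}`. -/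
def Smatrix (N : ℕ) (g : (p : ℕ) → (Fin p → Fin N) → ℝ) (βp : ℕ → ℝ) (η : Fin N → ℝ)
    (A B : Finset (Fin N)) (σA : Fin N → Bool) :
    Matrix {i : Fin N // i ∈ (A ∪ B)ᶜ} {i : Fin N // i ∈ (A ∪ B)ᶜ} ℝ :=
  Matrix.of fun i j =>
    gcov N g βp η A B σA (hfun N g βp η A B σA i.1) (hfun N g βp η A B σA j.1) /
      (Real.sqrt (1 - mag N g βp η A B σA i.1 ^ 2) *
        Real.sqrt (1 - mag N g βp η A B σA j.1 ^ 2))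

/-- The couplings `g` form an i.i.d. family of standard Gaussian random variables
(indexed by all tuples of pairwise distinct indices, for all `p ≥ 2`), and vanish on
tuples with coinciding indices. -/
def IsIIDGaussianCouplings {Ω' : Type} [MeasurableSpace Ω'] (P : Measure Ω') (N : ℕ)
    (g : Ω' → (p : ℕ) → (Fin p → Fin N) → ℝ) : Prop :=
  (∀ (p : ℕ) (t : Fin p → Fin N), Measurable fun ω => g ω p t) ∧
  (∀ ω (p : ℕ) (t : Fin p → Fin N), ¬ Function.Injective t → g ω p t = 0) ∧
  (∀ (p : ℕ) (t : Fin p → Fin N), 2 ≤ p → Function.Injective t →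
    Measure.map (fun ω => g ω p t) P = gaussianReal 0 1) ∧
  iIndepFun
    (m := fun _ : {pt : (p : ℕ) × (Fin p → Fin N) // 2 ≤ pt.1 ∧ Function.Injective pt.2} =>
      Real.measurableSpace)
    (fun (i : {pt : (p : ℕ) × (Fin p → Fin N) // 2 ≤ pt.1 ∧ Function.Injective pt.2}) ω =>
      g ω i.1.1 i.1.2) P

end SpinGlassDefs
theorem hfun_identity
    (N : ℕ) (g : (p : ℕ) → (Fin p → Fin N) → ℝ) (βp : ℕ → ℝ) (η : Fin N → ℝ)
    (hβp : ∀ p, 0 ≤ βp p)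
    (hβsum : Summable fun p : ℕ =>
      if 2 ≤ p then Real.sqrt ((p : ℝ) ^ 3 * Real.log p) * βp p else 0)
    (hg0 : ∀ (p : ℕ) (t : Fin p → Fin N), ¬ Function.Injective t → g p t = 0)
    (hH : HamSummable N g βp)
    (A B : Finset (Fin N)) (hAB : Disjoint A B) (k : ℕ) (hcard : (A ∪ B).card = k)
    (σA : Fin N → Bool) (j : Fin N) (hj : j ∉ A ∪ B) :
    gibbs N g βp η A B σA (hfun N g βp η A B σA j) = 0 ∧
    ∀ f : (Fin N → Bool) → ℝ, dependsOn f ((A ∪ B)ᶜ) →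
      gcov N g βp η A B σA f (fun σ => spinVal (σ j)) =
        gcov N g βp η A B σA (dd j f) (fun σ => spinVal (σ j)) +
          1 / 2 * gcov N g βp η A B σA f (hfun N g βp η A B σA j) := by
    classical
  have hZpos : (0:ℝ) < ∑ σ : Fin N → Bool, Real.exp (ham N g βp η A B σA σ) :=
    Finset.sum_pos (fun σ _ => Real.exp_pos _) Finset.univ_nonempty
  have hZne : (∑ σ : Fin N → Bool, Real.exp (ham N g βp η A B σA σ)) ≠ 0 := ne_of_gt hZpos
  have hfl : ∀ σ : Fin N → Bool, flipAt j (flipAt j σ) = σ := by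
    intro σ; funext i
    by_cases h : i = j <;> simp [flipAt, Function.update, h]
  have hsumflip : ∀ F : (Fin N → Bool) → ℝ,
      ∑ σ : Fin N → Bool, F (flipAt j σ) = ∑ σ : Fin N → Bool, F σ := by
    intro F
    exact Fintype.sum_bijective (flipAt j)
      (Function.Involutive.bijective hfl) _ _ (fun σ => rfl)
  have hflipj : ∀ σ : Fin N → Bool, spinVal (flipAt j σ j) = -spinVal (σ j) := by
    intro σ; cases h : σ j <;> simp [flipAt, Function.update, spinVal, h]
  have hkey : ∀ σ : Fin N → Bool,
      Real.exp (-2 * spinVal (σ j) * cavity N g βp η A B σA j σ)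
          * Real.exp (ham N g βp η A B σA σ)
        = Real.exp (ham N g βp η A B σA (flipAt j σ)) := by
    intro σ
    have hsq : spinVal (σ j) * spinVal (σ j) = 1 := by
      cases h : σ j <;> simp [spinVal, h]
    have harg : -2 * spinVal (σ j) * cavity N g βp η A B σA j σ
        = ham N g βp η A B σA (flipAt j σ) - ham N g βp η A B σA σ := by
      simp only [cavity, dd]
      linear_combination
        (ham N g βp η A B σA (flipAt j σ) - ham N g βp η A B σA σ) * hsq
    rw [harg, ← Real.exp_add]
    congr 1
    ring
  set m : ℝ := mag N g βp η A B σA j with hmdef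
  have hmZ : ∑ σ : Fin N → Bool, spinVal (σ j) * Real.exp (ham N g βp η A B σA σ)
      = m * ∑ σ : Fin N → Bool, Real.exp (ham N g βp η A B σA σ) := by
    rw [hmdef]
    simp only [mag, gibbs]
    rw [div_mul_cancel₀ _ hZne]
  have master : ∀ F : (Fin N → Bool) → ℝ,
      ∑ σ : Fin N → Bool, F σ * hfun N g βp η A B σA j σ * Real.exp (ham N g βp η A B σA σ)
        = ∑ σ : Fin N → Bool,
            (F σ + F (flipAt j σ)) * (spinVal (σ j) - m) * Real.exp (ham N g βp η A B σA σ) := by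
    intro F
    have step : ∀ σ : Fin N → Bool,
        F σ * hfun N g βp η A B σA j σ * Real.exp (ham N g βp η A B σA σ)
          = F σ * (spinVal (σ j) - m) * Real.exp (ham N g βp η A B σA σ)
            - F σ * (spinVal (σ j) + m) * Real.exp (ham N g βp η A B σA (flipAt j σ)) := by
      intro σ
      simp only [hfun, ← hmdef]
      linear_combination (-(F σ * (spinVal (σ j) + m))) * hkey σ
    calc ∑ σ : Fin N → Bool, F σ * hfun N g βp η A B σA j σ * Real.exp (ham N g βp η A B σA σ)
        = ∑ σ : Fin N → Bool,
            (F σ * (spinVal (σ j) - m) * Real.exp (ham N g βp η A B σA σ)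
              - F σ * (spinVal (σ j) + m) * Real.exp (ham N g βp η A B σA (flipAt j σ))) :=
          Finset.sum_congr rfl fun σ _ => step σ
      _ = (∑ σ : Fin N → Bool, F σ * (spinVal (σ j) - m) * Real.exp (ham N g βp η A B σA σ))
            - ∑ σ : Fin N → Bool,
                F σ * (spinVal (σ j) + m) * Real.exp (ham N g βp η A B σA (flipAt j σ)) :=
          Finset.sum_sub_distrib _ _
      _ = (∑ σ : Fin N → Bool, F σ * (spinVal (σ j) - m) * Real.exp (ham N g βp η A B σA σ))
            - ∑ σ : Fin N → Bool,
                F (flipAt j σ) * (spinVal (flipAt j σ j) + m)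
                  * Real.exp (ham N g βp η A B σA σ) := by
          rw [← hsumflip (fun σ => F (flipAt j σ) * (spinVal (flipAt j σ j) + m)
            * Real.exp (ham N g βp η A B σA σ))]
          congr 1
          refine Finset.sum_congr rfl fun σ _ => ?_
          rw [hfl σ]
      _ = ∑ σ : Fin N → Bool,
            (F σ + F (flipAt j σ)) * (spinVal (σ j) - m)
              * Real.exp (ham N g βp η A B σA σ) := by
          rw [← Finset.sum_sub_distrib]
          refine Finset.sum_congr rfl fun σ _ => ?_
          rw [hflipj σ]
          ring
  have hnum1 : ∑ σ : Fin N → Bool,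
      hfun N g βp η A B σA j σ * Real.exp (ham N g βp η A B σA σ) = 0 := by
    have h1 := master (fun _ => 1)
    simp only [one_mul] at h1
    rw [h1]
    have h2 : ∑ σ : Fin N → Bool,
        (1 + 1) * (spinVal (σ j) - m) * Real.exp (ham N g βp η A B σA σ)
        = 2 * (∑ σ : Fin N → Bool, spinVal (σ j) * Real.exp (ham N g βp η A B σA σ))
            - 2 * m * ∑ σ : Fin N → Bool, Real.exp (ham N g βp η A B σA σ) := by
      rw [Finset.mul_sum, Finset.mul_sum, ← Finset.sum_sub_distrib]
      exact Finset.sum_congr rfl fun σ _ => by ring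
    rw [h2, hmZ]
    ring
  have part1 : gibbs N g βp η A B σA (hfun N g βp η A B σA j) = 0 := by
    simp only [gibbs]
    rw [hnum1]
    exact zero_div _
  refine ⟨part1, ?_⟩
  intro f _
  have hms : gibbs N g βp η A B σA (fun σ => spinVal (σ j)) = m := hmdef.symm
  have hfinal : (∑ σ : Fin N → Bool,
        f σ * spinVal (σ j) * Real.exp (ham N g βp η A B σA σ))
        - m * ∑ σ : Fin N → Bool, f σ * Real.exp (ham N g βp η A B σA σ)
      = ((∑ σ : Fin N → Bool,
            dd j f σ * spinVal (σ j) * Real.exp (ham N g βp η A B σA σ))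
          - m * ∑ σ : Fin N → Bool, dd j f σ * Real.exp (ham N g βp η A B σA σ))
        + (1/2) * ∑ σ : Fin N → Bool,
            f σ * hfun N g βp η A B σA j σ * Real.exp (ham N g βp η A B σA σ) := by
    rw [master f, Finset.mul_sum, Finset.mul_sum, Finset.mul_sum,
      ← Finset.sum_sub_distrib, ← Finset.sum_sub_distrib, ← Finset.sum_add_distrib]
    refine Finset.sum_congr rfl fun σ _ => ?_
    simp only [dd]
    ring
  simp only [gcov]
  rw [hms, part1]
  simp only [gibbs]
  linear_combination
    (1 / (∑ σ : Fin N → Bool, Real.exp (ham N g βp η A B σA σ))) * hfinal
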